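/- arXiv:1511.02734 — 2 statements merged into one kernel-verified Lean document; each statement's English description precedes it below -/
import Mathlib

section
/- Let E be a finite set with symmetric submodular order function. Then there exists a tree-decomposition of E such that any two maximal tangles are distinguished efficiently by a separation corresponding to an edge of the decomposition tree. -/
variable {E : Type*}

/-- `f` is symmetric: `f X = f (E \ X)` for all `X ⊆ E`. -/
def FSymm (f : Set E → ℤ) : Prop := ∀ X : Set E, f X = f Xᶜ

/-- `f` is submodular. -/
def FSubmod (f : Set E → ℤ) : Prop :=
  ∀ X Y : Set E, f (X ∩ Y) + f (X ∪ Y) ≤ f X + f Y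

/-- Separations `(A,B)` and `(C,D)` are nested: some side of the first
is contained in some side of the second. -/
def Nested (A B C D : Set E) : Prop := A ⊆ C ∨ A ⊆ D ∨ B ⊆ C ∨ B ⊆ D

/-- `T` is a tangle of order `k+1`: a set of small sides of separations of
order at most `k`, orienting every separation of order at most `k`, such that
no three small sides cover `E` and the complement of a singleton is never small. -/
def IsTangle (f : Set E → ℤ) (k : ℤ) (T : Set (Set E)) : Prop :=
  (∀ A ∈ T, f A ≤ k) ∧
  (∀ A : Set E, f A ≤ k → A ∈ T ∨ Aᶜ ∈ T) ∧
  (∀ A₁ ∈ T, ∀ A₂ ∈ T, ∀ A₃ ∈ T, A₁ ∪ A₂ ∪ A₃ ≠ Set.univ) ∧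
  (∀ e : E, ({e}ᶜ : Set E) ∉ T)

/-- A tangle is maximal if it is not included in any other tangle. -/
def IsMaximalTangle (f : Set E → ℤ) (T : Set (Set E)) : Prop :=
  (∃ k, IsTangle f k T) ∧
  ∀ T' : Set (Set E), (∃ k, IsTangle f k T') → T ⊆ T' → T' = T

/-- The separation with sides `A`, `Aᶜ` distinguishes the tangles `P` and `Q`. -/
def Distinguishes (A : Set E) (P Q : Set (Set E)) : Prop :=
  (A ∈ P ∧ Aᶜ ∈ Q) ∨ (Aᶜ ∈ P ∧ A ∈ Q)

/-- The separation with sides `A`, `Aᶜ` distinguishes `P` and `Q` efficiently. -/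
def DistinguishesEff (f : Set E → ℤ) (A : Set E) (P Q : Set (Set E)) : Prop :=
  Distinguishes A P Q ∧ ∀ C : Set E, Distinguishes C P Q → f A ≤ f C

variable {V : Type*}

/-- `P` is a partition of `E` into (possibly empty) classes indexed by `V`. -/
def IsPartitionFam (P : V → Set E) : Prop :=
  (∀ x y : V, x ≠ y → Disjoint (P x) (P y)) ∧ (⋃ x, P x) = Set.univ

/-- For an edge `tu` of the decomposition tree `G`, the side `S_t` of the
corresponding separation: the union of the parts over the component of
`G - tu` containing `t`. -/
def treeSide (G : SimpleGraph V) (P : V → Set E) (t u : V) : Set E :=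
  ⋃ x ∈ {x | (G.deleteEdges {s(t, u)}).Reachable t x}, P x

/-!
Build a nested set `N` of separations greedily: treat the pairs of distinct maximal tangles that
are not yet efficiently distinguished in order of increasing distinguishing order, and for the
current pair add an efficient distinguisher crossing as few members of `N` as possible. It
crosses none, by the fish lemma: if it crossed some `C ∈ N`, submodularity would make one of its
corners with `C` an efficient distinguisher crossing strictly fewer members of `N`.

Once every member is oriented away from a fixed point, a nested set of separations is a laminar
family. Its members together with `univ` form a tree in which the parent of a member is its least
strict superset, and the parts `A \ ⋃ {B | B ⊂ A}` make this tree a tree-decomposition in which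
every member is the side of an edge.
-/

namespace IsTangle

variable {f : Set E → ℤ} {k : ℤ} {T : Set (Set E)}

theorem le_of_mem (hT : IsTangle f k T) {A : Set E} (hA : A ∈ T) : f A ≤ k :=
  hT.1 A hA

theorem mem_or_compl_mem (hT : IsTangle f k T) {A : Set E} (hA : f A ≤ k) : A ∈ T ∨ Aᶜ ∈ T :=
  hT.2.1 A hA

theorem union_union_ne_univ (hT : IsTangle f k T) {A B C : Set E} (hA : A ∈ T) (hB : B ∈ T)
    (hC : C ∈ T) : A ∪ B ∪ C ≠ Set.univ :=
  hT.2.2.1 A hA B hB C hC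

theorem union_ne_univ (hT : IsTangle f k T) {A B : Set E} (hA : A ∈ T) (hB : B ∈ T) :
    A ∪ B ≠ Set.univ := by
  simpa [Set.union_assoc] using hT.union_union_ne_univ hA hB hB

theorem ne_univ (hT : IsTangle f k T) {A : Set E} (hA : A ∈ T) : A ≠ Set.univ := by
  simpa using hT.union_ne_univ hA hA

theorem union_mem (hT : IsTangle f k T) {A B : Set E} (hA : A ∈ T) (hB : B ∈ T)
    (hAB : f (A ∪ B) ≤ k) : A ∪ B ∈ T :=
  (hT.mem_or_compl_mem hAB).resolve_right fun h ↦
    hT.union_union_ne_univ hA hB h (Set.union_compl_self _)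

theorem mem_of_subset (hT : IsTangle f k T) {A B : Set E} (hB : B ∈ T) (hAB : A ⊆ B)
    (hA : f A ≤ k) : A ∈ T :=
  (hT.mem_or_compl_mem hA).resolve_right fun h ↦
    hT.union_ne_univ hB h (Set.compl_subset_iff_union.1 (Set.compl_subset_compl.2 hAB))

end IsTangle

section Distinguishes

variable {f : Set E → ℤ} {A : Set E} {P Q : Set (Set E)}

theorem Distinguishes.symm (h : Distinguishes A P Q) : Distinguishes A Q P :=
  (Or.symm h).imp And.symm And.symm

theorem Distinguishes.compl (h : Distinguishes A P Q) : Distinguishes Aᶜ P Q := by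
  rw [Distinguishes, compl_compl]
  exact Or.symm h

theorem DistinguishesEff.symm (h : DistinguishesEff f A P Q) : DistinguishesEff f A Q P :=
  ⟨h.1.symm, fun C hC ↦ h.2 C hC.symm⟩

theorem DistinguishesEff.compl (hsym : FSymm f) (h : DistinguishesEff f A P Q) :
    DistinguishesEff f Aᶜ P Q :=
  ⟨h.1.compl, fun C hC ↦ hsym A ▸ h.2 C hC⟩

theorem exists_distinguishes_of_isMaximalTangle (hP : IsMaximalTangle f P)
    (hQ : IsMaximalTangle f Q) (hPQ : P ≠ Q) : ∃ A, Distinguishes A P Q := by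
  by_contra! hnd
  obtain ⟨⟨kP, hPk⟩, hPmax⟩ := hP
  obtain ⟨⟨kQ, hQk⟩, hQmax⟩ := hQ
  rcases le_total kP kQ with hk | hk
  · refine hPQ (hPmax Q ⟨kQ, hQk⟩ fun A hA ↦ ?_).symm
    exact (hQk.mem_or_compl_mem ((hPk.le_of_mem hA).trans hk)).resolve_right
      fun h ↦ hnd A (Or.inl ⟨hA, h⟩)
  · refine hPQ (hQmax P ⟨kP, hPk⟩ fun A hA ↦ ?_)
    exact (hPk.mem_or_compl_mem ((hQk.le_of_mem hA).trans hk)).resolve_right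
      fun h ↦ hnd A (Or.inr ⟨h, hA⟩)

theorem Distinguishes.ne_empty_and_ne_univ {kP kQ : ℤ} (hP : IsTangle f kP P)
    (hQ : IsTangle f kQ Q) (h : Distinguishes A P Q) : A ≠ ∅ ∧ A ≠ Set.univ := by
  refine ⟨?_, ?_⟩ <;> rintro rfl <;> rcases h with ⟨h1, h2⟩ | ⟨h1, h2⟩
  · exact hQ.ne_univ h2 Set.compl_empty
  · exact hP.ne_univ h1 Set.compl_empty
  · exact hP.ne_univ h1 rfl
  · exact hQ.ne_univ h2 rfl

end Distinguishes

section Nested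

variable {A C D : Set E}

theorem nested_comm : Nested A Aᶜ C Cᶜ ↔ Nested C Cᶜ A Aᶜ := by
  unfold Nested
  rw [Set.subset_compl_comm (s := A), Set.compl_subset_comm (s := A),
    Set.compl_subset_compl (s := A), ← Set.compl_subset_compl (s := C) (t := A)]
  tauto

theorem nested_compl_right : Nested A Aᶜ Cᶜ Cᶜᶜ ↔ Nested A Aᶜ C Cᶜ := by
  simp only [Nested, compl_compl]
  tauto

theorem nested_compl_left : Nested Aᶜ Aᶜᶜ C Cᶜ ↔ Nested A Aᶜ C Cᶜ := by
  rw [nested_comm, nested_compl_right, nested_comm]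

theorem nested_union_left (A C : Set E) : Nested (A ∪ C) (A ∪ C)ᶜ C Cᶜ :=
  Or.inr <| Or.inr <| Or.inr <| Set.compl_subset_compl.2 Set.subset_union_right

theorem nested_union_of_not_nested (hAC : ¬ Nested A Aᶜ C Cᶜ) (hDA : Nested D Dᶜ A Aᶜ)
    (hDC : Nested D Dᶜ C Cᶜ) : Nested D Dᶜ (A ∪ C) (A ∪ C)ᶜ := by
  have hAC' : ¬ (A ⊆ Cᶜ) := fun h ↦ hAC (Or.inr (Or.inl h))
  simp only [Nested, Set.compl_union] at *
  rcases hDA with h | h | h | h <;> rcases hDC with h' | h' | h' | h'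
  all_goals first
    | exact Or.inl (h.trans Set.subset_union_left)
    | exact Or.inl (h'.trans Set.subset_union_right)
    | exact Or.inr (Or.inr (Or.inl (h.trans Set.subset_union_left)))
    | exact Or.inr (Or.inr (Or.inl (h'.trans Set.subset_union_right)))
    | exact Or.inr (Or.inl (Set.subset_inter h h'))
    | exact Or.inr (Or.inr (Or.inr (Set.subset_inter h h')))
    | exact absurd (fun x hxA hxC ↦ h (Set.compl_subset_compl.1 h' hxC) hxA) hAC'
    | exact absurd (fun x hxA hxC ↦ h' (Set.compl_subset_compl.1 h hxA) hxC) hAC'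

end Nested

section Fish

variable {f : Set E → ℤ} {kP kQ : ℤ} {P Q : Set (Set E)} {A C X Y : Set E}

theorem Distinguishes.le_left (hsym : FSymm f) (hP : IsTangle f kP P)
    (h : Distinguishes A P Q) : f A ≤ kP := by
  rcases h with ⟨h, -⟩ | ⟨h, -⟩
  · exact hP.le_of_mem h
  · exact hsym A ▸ hP.le_of_mem h

theorem exists_mem_and_mem_of_not_distinguishes (hP : IsTangle f kP P) (hQ : IsTangle f kQ Q)
    (hCP : f C ≤ kP) (hCQ : f C ≤ kQ) (hnd : ¬ Distinguishes C P Q) :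
    ∃ C₀, (C₀ = C ∨ C₀ = Cᶜ) ∧ C₀ ∈ P ∧ C₀ ∈ Q := by
  rcases hP.mem_or_compl_mem hCP with h | h <;> rcases hQ.mem_or_compl_mem hCQ with h' | h'
  · exact ⟨C, Or.inl rfl, h, h'⟩
  · exact absurd (Or.inl ⟨h, h'⟩) hnd
  · exact absurd (Or.inr ⟨h, h'⟩) hnd
  · exact ⟨Cᶜ, Or.inr rfl, h, h'⟩

theorem DistinguishesEff.le_or_le_of_union_eq (hsym : FSymm f) (hP : IsTangle f kP P)
    (hQ : IsTangle f kQ Q) (hC : DistinguishesEff f C P Q) (hXY : X ∪ Y = C) :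
    f C ≤ f X ∨ f C ≤ f Y := by
  wlog hCPQ : C ∈ P ∧ Cᶜ ∈ Q generalizing P Q kP kQ
  · exact this hQ hP hC.symm (hC.1.resolve_left hCPQ).symm
  have mem_Q : ∀ Z ⊆ C, f Z < f C → Z ∈ Q := fun Z hZC hZ ↦
    have hZP : Z ∈ P := hP.mem_of_subset hCPQ.1 hZC (hZ.le.trans (hP.le_of_mem hCPQ.1))
    (hQ.mem_or_compl_mem (hZ.le.trans (hsym C ▸ hQ.le_of_mem hCPQ.2))).resolve_right
      fun hZQ ↦ (hC.2 Z (Or.inl ⟨hZP, hZQ⟩)).not_gt hZ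
  by_contra! hlt
  refine hQ.union_union_ne_univ (mem_Q X (hXY ▸ Set.subset_union_left) hlt.1)
    (mem_Q Y (hXY ▸ Set.subset_union_right) hlt.2) hCPQ.2 ?_
  rw [hXY, Set.union_compl_self]

/-- Otherwise, by submodularity, both pieces `C ∩ A` and `C ∩ Aᶜ` of `C` would have order less
than `f C`. -/
theorem exists_union_le_of_distinguishesEff (hsym : FSymm f) (hsub : FSubmod f)
    (hP : IsTangle f kP P) (hQ : IsTangle f kQ Q) (hC : DistinguishesEff f C P Q) (A : Set E) :
    ∃ X, (X = A ∨ X = Aᶜ) ∧ f (X ∪ C) ≤ f A := by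
  have hsubA := hsub C A
  have hsubAc := hsub C Aᶜ
  rw [Set.union_comm] at hsubA hsubAc
  rw [← hsym A] at hsubAc
  rcases hC.le_or_le_of_union_eq hsym hP hQ (Set.inter_union_compl C A) with h | h
  · exact ⟨A, Or.inl rfl, by linarith⟩
  · exact ⟨Aᶜ, Or.inr rfl, by linarith⟩

theorem Distinguishes.union (hsym : FSymm f) (hP : IsTangle f kP P) (hQ : IsTangle f kQ Q)
    (hX : Distinguishes X P Q) (hCP : C ∈ P) (hCQ : C ∈ Q) (hle : f (X ∪ C) ≤ f X) :
    Distinguishes (X ∪ C) P Q := by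
  wlog hXPQ : X ∈ P ∧ Xᶜ ∈ Q generalizing P Q kP kQ
  · exact (this hQ hP hX.symm hCQ hCP (hX.resolve_left hXPQ).symm).symm
  refine Or.inl ⟨hP.union_mem hXPQ.1 hCP (hle.trans (hP.le_of_mem hXPQ.1)), ?_⟩
  refine (hQ.mem_or_compl_mem (hle.trans (hX.symm.le_left hsym hQ))).resolve_left fun h ↦ ?_
  refine hQ.union_ne_univ h hXPQ.2 ?_
  rw [Set.union_right_comm, Set.union_compl_self, Set.univ_union]

theorem DistinguishesEff.union (hsym : FSymm f) (hP : IsTangle f kP P) (hQ : IsTangle f kQ Q)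
    (hX : DistinguishesEff f X P Q) (hCP : C ∈ P) (hCQ : C ∈ Q) (hle : f (X ∪ C) ≤ f X) :
    DistinguishesEff f (X ∪ C) P Q :=
  ⟨hX.1.union hsym hP hQ hCP hCQ hle, fun D hD ↦ hle.trans (hX.2 D hD)⟩

/-- The fish lemma. -/
theorem DistinguishesEff.exists_nested {kP' kQ' : ℤ} {P' Q' : Set (Set E)} (hsym : FSymm f)
    (hsub : FSubmod f) (hP : IsTangle f kP P) (hQ : IsTangle f kQ Q) (hP' : IsTangle f kP' P')
    (hQ' : IsTangle f kQ' Q') (hA : DistinguishesEff f A P Q) (hC : DistinguishesEff f C P' Q')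
    (hCA : f C ≤ f A) (hnd : ¬ Distinguishes C P Q) (hAC : ¬ Nested A Aᶜ C Cᶜ) :
    ∃ A', DistinguishesEff f A' P Q ∧ Nested A' A'ᶜ C Cᶜ ∧
      ∀ D, Nested D Dᶜ A Aᶜ → Nested D Dᶜ C Cᶜ → Nested D Dᶜ A' A'ᶜ := by
  obtain ⟨C₀, hC₀, hC₀P, hC₀Q⟩ := exists_mem_and_mem_of_not_distinguishes hP hQ
    (hCA.trans (hA.1.le_left hsym hP)) (hCA.trans (hA.1.symm.le_left hsym hQ)) hnd
  have hnested_C₀ : ∀ {D}, Nested D Dᶜ C₀ C₀ᶜ ↔ Nested D Dᶜ C Cᶜ := by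
    rcases hC₀ with rfl | rfl
    exacts [Iff.rfl, nested_compl_right]
  have hC₀eff : DistinguishesEff f C₀ P' Q' := by
    rcases hC₀ with rfl | rfl
    exacts [hC, hC.compl hsym]
  obtain ⟨X, hX, hXC⟩ := exists_union_le_of_distinguishesEff hsym hsub hP' hQ' hC₀eff A
  have hnested_X : ∀ {D}, Nested D Dᶜ X Xᶜ ↔ Nested D Dᶜ A Aᶜ := by
    rcases hX with rfl | rfl
    exacts [Iff.rfl, nested_compl_right]
  have hXeff : DistinguishesEff f X P Q := by
    rcases hX with rfl | rfl
    exacts [hA, hA.compl hsym]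
  have hfX : f X = f A := by
    rcases hX with rfl | rfl
    exacts [rfl, (hsym A).symm]
  have hXC₀ : ¬ Nested X Xᶜ C₀ C₀ᶜ := by
    rwa [hnested_C₀, nested_comm, hnested_X, nested_comm]
  refine ⟨X ∪ C₀, hXeff.union hsym hP hQ hC₀P hC₀Q (hfX ▸ hXC), ?_, fun D hDA hDC ↦ ?_⟩
  · exact hnested_C₀.1 (nested_union_left X C₀)
  · exact nested_union_of_not_nested hXC₀ (hnested_X.2 hDA) (hnested_C₀.2 hDC)

end Fish

section GreedyNestedSet

variable {f : Set E → ℤ} {N : Finset (Set E)} {P Q : Set (Set E)} {A₀ : Set E}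

def unresolvedPairs (f : Set E → ℤ) (N : Finset (Set E)) : Set (Set (Set E) × Set (Set E)) :=
  {pq | IsMaximalTangle f pq.1 ∧ IsMaximalTangle f pq.2 ∧ pq.1 ≠ pq.2 ∧
    ∀ A ∈ N, ¬ DistinguishesEff f A pq.1 pq.2}

theorem unresolvedPairs_insert_subset (A : Set E) (N : Finset (Set E)) :
    unresolvedPairs f (insert A N) ⊆ unresolvedPairs f N :=
  fun _ ⟨hP, hQ, hPQ, hN⟩ ↦ ⟨hP, hQ, hPQ, fun B hB ↦ hN B (Finset.mem_insert_of_mem hB)⟩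

/-- The invariant of the greedy construction, which adds efficient distinguishers in order of
increasing order. -/
structure IsGreedyNestedSet (f : Set E → ℤ) (N : Finset (Set E)) : Prop where
  nested : ∀ A ∈ N, ∀ B ∈ N, Nested A Aᶜ B Bᶜ
  distinguishesEff : ∀ A ∈ N, ∃ P Q, IsMaximalTangle f P ∧ IsMaximalTangle f Q ∧
    DistinguishesEff f A P Q
  le_of_unresolved : ∀ A ∈ N, ∀ pq ∈ unresolvedPairs f N, ∀ D, Distinguishes D pq.1 pq.2 →
    f A ≤ f D

theorem exists_min_distinguisher [Finite E] (hU : (unresolvedPairs f N).Nonempty) :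
    ∃ P Q A₀, (P, Q) ∈ unresolvedPairs f N ∧ Distinguishes A₀ P Q ∧
      ∀ pq ∈ unresolvedPairs f N, ∀ D, Distinguishes D pq.1 pq.2 → f A₀ ≤ f D := by
  obtain ⟨pq, hpq⟩ := hU
  obtain ⟨D, hD⟩ := exists_distinguishes_of_isMaximalTangle hpq.1 hpq.2.1 hpq.2.2.1
  obtain ⟨⟨⟨P, Q⟩, A₀⟩, ⟨hPQ, hA₀⟩, hmin⟩ := Set.exists_min_image
    {x : (Set (Set E) × Set (Set E)) × Set E | x.1 ∈ unresolvedPairs f N ∧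
      Distinguishes x.2 x.1.1 x.1.2} (fun x ↦ f x.2) (Set.toFinite _) ⟨(pq, D), hpq, hD⟩
  exact ⟨P, Q, A₀, hPQ, hA₀, fun pq' hpq' D hD ↦ hmin (pq', D) ⟨hpq', hD⟩⟩

/-- An efficient distinguisher crossing the fewest members of `N` crosses none of them, by the
fish lemma. -/
theorem IsGreedyNestedSet.exists_distinguishesEff_nested [Finite E] (hsym : FSymm f)
    (hsub : FSubmod f) (hN : IsGreedyNestedSet f N) (hPQ : (P, Q) ∈ unresolvedPairs f N)
    (hA₀ : DistinguishesEff f A₀ P Q) :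
    ∃ A, DistinguishesEff f A P Q ∧ ∀ C ∈ N, Nested A Aᶜ C Cᶜ := by
  classical
  obtain ⟨A, hA, hAmin⟩ := Set.exists_min_image {X | DistinguishesEff f X P Q}
    (fun X ↦ (N.filter fun C ↦ ¬ Nested X Xᶜ C Cᶜ).card) (Set.toFinite _) ⟨A₀, hA₀⟩
  refine ⟨A, hA, fun C hC ↦ by_contra fun hAC ↦ ?_⟩
  obtain ⟨⟨kP, hPk⟩, -⟩ := hPQ.1
  obtain ⟨⟨kQ, hQk⟩, -⟩ := hPQ.2.1
  obtain ⟨P', Q', ⟨⟨kP', hP'k⟩, -⟩, ⟨⟨kQ', hQ'k⟩, -⟩, hCeff⟩ := hN.distinguishesEff C hC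
  have hCle : ∀ D, Distinguishes D P Q → f C ≤ f D := hN.le_of_unresolved C hC _ hPQ
  have hnd : ¬ Distinguishes C P Q := fun h ↦ hPQ.2.2.2 C hC ⟨h, hCle⟩
  obtain ⟨A', hA'eff, hA'C, hA'N⟩ :=
    hA.exists_nested hsym hsub hPk hQk hP'k hQ'k hCeff (hCle A hA.1) hnd hAC
  refine (hAmin A' hA'eff).not_gt (Finset.card_lt_card ⟨?_, fun h ↦ ?_⟩)
  · refine Finset.monotone_filter_right N fun D _ hA'D hAD ↦ hA'D ?_
    exact nested_comm.1 (hA'N D (nested_comm.1 hAD) (hN.nested D ‹_› C hC))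
  · exact (Finset.mem_filter.1 (h (Finset.mem_filter.2 ⟨hC, hAC⟩))).2 hA'C

theorem IsGreedyNestedSet.insert {A : Set E} (hN : IsGreedyNestedSet f N)
    (hPQ : (P, Q) ∈ unresolvedPairs f N) (hA₀ : DistinguishesEff f A₀ P Q)
    (hA₀min : ∀ pq ∈ unresolvedPairs f N, ∀ D, Distinguishes D pq.1 pq.2 → f A₀ ≤ f D)
    (hA : DistinguishesEff f A P Q) (hAN : ∀ C ∈ N, Nested A Aᶜ C Cᶜ) :
    IsGreedyNestedSet f (insert A N) where
  nested := by
    simp only [Finset.mem_insert, forall_eq_or_imp]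
    exact ⟨⟨Or.inl subset_rfl, hAN⟩, fun B hB ↦ ⟨nested_comm.1 (hAN B hB), hN.nested B hB⟩⟩
  distinguishesEff := by
    simp only [Finset.mem_insert, forall_eq_or_imp]
    exact ⟨⟨P, Q, hPQ.1, hPQ.2.1, hA⟩, hN.distinguishesEff⟩
  le_of_unresolved := by
    simp only [Finset.mem_insert, forall_eq_or_imp]
    refine ⟨fun pq hpq D hD ↦ ?_, fun B hB pq hpq ↦
      hN.le_of_unresolved B hB pq (unresolvedPairs_insert_subset A N hpq)⟩
    exact (hA.2 A₀ hA₀.1).trans (hA₀min pq (unresolvedPairs_insert_subset A N hpq) D hD)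

theorem IsGreedyNestedSet.exists_unresolvedPairs_eq_empty [Finite E] (hsym : FSymm f)
    (hsub : FSubmod f) (hN : IsGreedyNestedSet f N) :
    ∃ N', IsGreedyNestedSet f N' ∧ unresolvedPairs f N' = ∅ := by
  induction hn : (unresolvedPairs f N).ncard using Nat.strong_induction_on generalizing N with
  | _ n ih =>
  rcases (unresolvedPairs f N).eq_empty_or_nonempty with hU | hU
  · exact ⟨N, hN, hU⟩
  obtain ⟨P, Q, A₀, hPQ, hA₀, hA₀min⟩ := exists_min_distinguisher hU
  have hA₀eff : DistinguishesEff f A₀ P Q := ⟨hA₀, hA₀min _ hPQ⟩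
  obtain ⟨A, hA, hAN⟩ := hN.exists_distinguishesEff_nested hsym hsub hPQ hA₀eff
  refine ih _ ?_ (hN.insert hPQ hA₀eff hA₀min hA hAN) rfl
  refine hn ▸ Set.ncard_lt_ncard ⟨unresolvedPairs_insert_subset A N, fun h ↦ ?_⟩
  exact (h hPQ).2.2.2 A (Finset.mem_insert_self A N) hA

theorem exists_nested_distinguishesEff [Finite E] (hsym : FSymm f) (hsub : FSubmod f) :
    ∃ N : Finset (Set E), (∀ A ∈ N, ∀ B ∈ N, Nested A Aᶜ B Bᶜ) ∧
      (∀ A ∈ N, A ≠ ∅ ∧ A ≠ Set.univ) ∧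
      ∀ P Q, IsMaximalTangle f P → IsMaximalTangle f Q → P ≠ Q →
        ∃ A ∈ N, DistinguishesEff f A P Q := by
  have hempty : IsGreedyNestedSet f ∅ := ⟨by simp, by simp, by simp⟩
  obtain ⟨N, hN, hU⟩ := hempty.exists_unresolvedPairs_eq_empty hsym hsub
  refine ⟨N, hN.nested, fun A hA ↦ ?_, fun P Q hP hQ hPQ ↦ ?_⟩
  · obtain ⟨P, Q, ⟨⟨kP, hPk⟩, -⟩, ⟨⟨kQ, hQk⟩, -⟩, hA⟩ := hN.distinguishesEff A hA
    exact hA.1.ne_empty_and_ne_univ hPk hQk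
  · by_contra! h
    exact (Set.eq_empty_iff_forall_notMem.1 hU (P, Q)) ⟨hP, hQ, hPQ, h⟩

end GreedyNestedSet

section ParentGraph

variable {W : Type*} {par : W → W} {r v x : W}

def parentGraph (par : W → W) : SimpleGraph W :=
  SimpleGraph.fromRel fun x y ↦ par x = y

theorem parentGraph_adj_parent (h : par x ≠ x) : (parentGraph par).Adj x (par x) :=
  (SimpleGraph.fromRel_adj _ _ _).2 ⟨h.symm, Or.inl rfl⟩

theorem parent_ne_self (hterm : ∀ v, ∃ n, par^[n] v = r) (hv : v ≠ r) : par v ≠ v := fun h ↦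
  hv <| (hterm v).elim fun n hn ↦ Function.iterate_fixed h n ▸ hn

/-- Otherwise `v` would be periodic, while its iterates reach the fixed point `r`. -/
theorem not_exists_iterate_parent_eq (hr : par r = r) (hterm : ∀ v, ∃ n, par^[n] v = r)
    (hv : v ≠ r) : ¬ ∃ n, par^[n] (par v) = v := by
  rintro ⟨n, hn⟩
  obtain ⟨m, hm⟩ := hterm v
  have hper : Function.IsPeriodicPt par ((n + 1) * (m + 1)) v :=
    Function.IsPeriodicPt.mul_const (by rwa [Function.IsPeriodicPt, Function.IsFixedPt,
      Function.iterate_succ_apply]) _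
  apply hv
  have hm_le : m ≤ (n + 1) * (m + 1) := by nlinarith
  rw [← hper.eq, ← Nat.sub_add_cancel hm_le, Function.iterate_add_apply, hm,
    Function.iterate_fixed hr]

theorem eq_of_parent_edge_eq (hr : par r = r) (hterm : ∀ v, ∃ n, par^[n] v = r) (hv : v ≠ r)
    (h : s(x, par x) = s(v, par v)) : x = v := by
  rcases Sym2.eq_iff.1 h with ⟨hxv, -⟩ | ⟨hxv, hpx⟩
  · exact hxv
  · exact absurd ⟨1, by rw [Function.iterate_one, ← hxv, hpx]⟩
      (not_exists_iterate_parent_eq hr hterm hv)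

theorem parentGraph_reachable_root (hterm : ∀ v, ∃ n, par^[n] v = r) (x : W) :
    (parentGraph par).Reachable x r := by
  obtain ⟨n, hn⟩ := hterm x
  induction n generalizing x with
  | zero => exact hn ▸ SimpleGraph.Reachable.refl x
  | succ n ih =>
    by_cases hx : x = r
    · exact hx ▸ SimpleGraph.Reachable.refl x
    · exact (parentGraph_adj_parent (parent_ne_self hterm hx)).reachable.trans
        (ih (par x) hn)

/-- The descendants of `v` are closed under adjacency once the edge to `par v` is deleted. -/
theorem exists_iterate_eq_of_reachable_deleteEdges
    (hx : ((parentGraph par).deleteEdges {s(v, par v)}).Reachable v x) :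
    ∃ n, par^[n] x = v := by
  rw [SimpleGraph.reachable_iff_reflTransGen] at hx
  induction hx with
  | refl => exact ⟨0, rfl⟩
  | @tail a b _ hab ih =>
    obtain ⟨n, hn⟩ := ih
    rw [SimpleGraph.deleteEdges_adj, parentGraph, SimpleGraph.fromRel_adj] at hab
    obtain ⟨⟨-, rfl | rfl⟩, hab⟩ := hab
    · cases n with
      | zero => exact absurd (by rw [← hn]; rfl) hab
      | succ n => exact ⟨n, by rwa [Function.iterate_succ_apply] at hn⟩
    · exact ⟨n + 1, by rwa [Function.iterate_succ_apply]⟩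

theorem reachable_deleteEdges_of_iterate_eq (hr : par r = r)
    (hterm : ∀ v, ∃ n, par^[n] v = r) (hv : v ≠ r) {n : ℕ} (hx : par^[n] x = v) :
    ((parentGraph par).deleteEdges {s(v, par v)}).Reachable v x := by
  induction n generalizing x with
  | zero => exact hx ▸ SimpleGraph.Reachable.refl x
  | succ n ih =>
    by_cases hxv : x = v
    · exact hxv ▸ SimpleGraph.Reachable.refl x
    have hpx : par x ≠ x := fun h ↦ hxv (Function.iterate_fixed h _ ▸ hx)
    have hadj : ((parentGraph par).deleteEdges {s(v, par v)}).Adj x (par x) :=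
      SimpleGraph.deleteEdges_adj.2 ⟨parentGraph_adj_parent hpx,
        fun h ↦ hxv (eq_of_parent_edge_eq hr hterm hv h)⟩
    exact (ih hx).trans hadj.reachable.symm

theorem reachable_deleteEdges_root_of_not_exists_iterate_eq (hr : par r = r)
    (hterm : ∀ v, ∃ n, par^[n] v = r) (hv : v ≠ r) (hx : ¬ ∃ n, par^[n] x = v) :
    ((parentGraph par).deleteEdges {s(v, par v)}).Reachable x r := by
  obtain ⟨n, hn⟩ := hterm x
  induction n generalizing x with
  | zero => exact hn ▸ SimpleGraph.Reachable.refl x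
  | succ n ih =>
    by_cases hxr : x = r
    · exact hxr ▸ SimpleGraph.Reachable.refl x
    have hpx : ¬ ∃ n, par^[n] (par x) = v := fun ⟨k, hk⟩ ↦ hx ⟨k + 1, hk⟩
    have hadj : ((parentGraph par).deleteEdges {s(v, par v)}).Adj x (par x) :=
      SimpleGraph.deleteEdges_adj.2 ⟨parentGraph_adj_parent (parent_ne_self hterm hxr),
        fun h ↦ hx ⟨0, eq_of_parent_edge_eq hr hterm hv h⟩⟩
    exact hadj.reachable.trans (ih hpx hn)

theorem setOf_reachable_deleteEdges_self (hr : par r = r) (hterm : ∀ v, ∃ n, par^[n] v = r)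
    (hv : v ≠ r) :
    {x | ((parentGraph par).deleteEdges {s(v, par v)}).Reachable v x} =
      {x | ∃ n, par^[n] x = v} :=
  Set.ext fun _ ↦ ⟨exists_iterate_eq_of_reachable_deleteEdges,
    fun ⟨_, hn⟩ ↦ reachable_deleteEdges_of_iterate_eq hr hterm hv hn⟩

theorem setOf_reachable_deleteEdges_parent (hr : par r = r)
    (hterm : ∀ v, ∃ n, par^[n] v = r) (hv : v ≠ r) :
    {x | ((parentGraph par).deleteEdges {s(v, par v)}).Reachable (par v) x} =
      {x | ∃ n, par^[n] x = v}ᶜ := by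
  have hpv := reachable_deleteEdges_root_of_not_exists_iterate_eq hr hterm hv
    (not_exists_iterate_parent_eq hr hterm hv)
  ext x
  refine ⟨fun hx ⟨_, hn⟩ ↦ not_exists_iterate_parent_eq hr hterm hv ?_, fun hx ↦ ?_⟩
  · exact exists_iterate_eq_of_reachable_deleteEdges
      ((reachable_deleteEdges_of_iterate_eq hr hterm hv hn).trans hx.symm)
  · exact hpv.trans (reachable_deleteEdges_root_of_not_exists_iterate_eq hr hterm hv hx).symm

/-- Every edge `s(v, par v)` is a bridge, since deleting it separates `v` from its parent. -/
theorem parentGraph_isTree (hr : par r = r) (hterm : ∀ v, ∃ n, par^[n] v = r) :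
    (parentGraph par).IsTree := by
  have : Nonempty W := ⟨r⟩
  refine ⟨⟨fun x y ↦ (parentGraph_reachable_root hterm x).trans
    (parentGraph_reachable_root hterm y).symm⟩, ?_⟩
  rw [SimpleGraph.isAcyclic_iff_forall_adj_isBridge]
  have bridge : ∀ v, par v ≠ v → (parentGraph par).IsBridge s(v, par v) := fun v hv hreach ↦
    have hvr : v ≠ r := fun h ↦ hv (h ▸ hr)
    not_exists_iterate_parent_eq hr hterm hvr
      (exists_iterate_eq_of_reachable_deleteEdges hreach)
  intro a b hab
  rcases ((SimpleGraph.fromRel_adj _ _ _).1 hab) with ⟨hne, rfl | rfl⟩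
  · exact bridge a hne.symm
  · rw [Sym2.eq_swap]
    exact bridge b hne

end ParentGraph

theorem IsPartitionFam.biUnion_compl {P : V → Set E} (hP : IsPartitionFam P) (S : Set V) :
    ⋃ x ∈ Sᶜ, P x = (⋃ x ∈ S, P x)ᶜ := by
  ext e
  obtain ⟨y, hy⟩ := Set.mem_iUnion.1 (hP.2.symm ▸ Set.mem_univ e : e ∈ ⋃ x, P x)
  simp only [Set.mem_iUnion, Set.mem_compl_iff, exists_prop, not_exists, not_and]
  refine ⟨fun ⟨x, hxS, hx⟩ z hzS hz ↦ ?_, fun h ↦ ⟨y, fun hyS ↦ h y hyS hy, hy⟩⟩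
  exact Set.disjoint_left.1 (hP.1 x z fun hxz ↦ hxS (hxz ▸ hzS)) hx hz

section Laminar

variable {ι : Type*} {F : ι → Set E} {r i j v x : ι}

structure IsRootedLaminar (F : ι → Set E) (r : ι) : Prop where
  injective : Function.Injective F
  subset_or_subset_or_disjoint : ∀ i j, F i ⊆ F j ∨ F j ⊆ F i ∨ Disjoint (F i) (F j)
  nonempty : ∀ i, i ≠ r → (F i).Nonempty
  root_eq_univ : F r = Set.univ

open Classical in
noncomputable def laminarParent (F : ι → Set E) (i : ι) : ι :=
  if h : ∃ j, F i ⊂ F j ∧ ∀ k, F i ⊂ F k → F j ⊆ F k then h.choose else i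

def laminarPart (F : ι → Set E) (i : ι) : Set E :=
  F i \ ⋃ (j) (_ : F j ⊂ F i), F j

/-- Each point of `F v` lies in the part of a minimal member containing it. -/
theorem biUnion_laminarPart [Finite E] (F : ι → Set E) (v : ι) :
    ⋃ x ∈ {x | F x ⊆ F v}, laminarPart F x = F v := by
  refine subset_antisymm (Set.iUnion₂_subset fun x hx ↦ Set.sdiff_subset.trans hx) fun e he ↦ ?_
  obtain ⟨x, ⟨hex, hxv⟩, hmin⟩ := (InvImage.wf F wellFounded_lt).has_min
    {x | e ∈ F x ∧ F x ⊆ F v} ⟨v, he, subset_rfl⟩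
  refine Set.mem_biUnion hxv ⟨hex, fun he' ↦ ?_⟩
  obtain ⟨j, hj, hej⟩ := Set.mem_iUnion₂.1 he'
  exact hmin j ⟨hej, hj.subset.trans hxv⟩ hj

namespace IsRootedLaminar

theorem exists_least_ssuperset [Finite E] (h : IsRootedLaminar F r) (hi : F i ≠ Set.univ) :
    ∃ j, F i ⊂ F j ∧ ∀ k, F i ⊂ F k → F j ⊆ F k := by
  obtain ⟨j, hj, hmin⟩ := (InvImage.wf F wellFounded_lt).has_min {j | F i ⊂ F j}
    ⟨r, show F i ⊂ F r by rw [h.root_eq_univ]; exact Set.ssubset_univ_iff.2 hi⟩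
  refine ⟨j, hj, fun k hk ↦ ?_⟩
  rcases h.subset_or_subset_or_disjoint j k with hjk | hkj | hdisj
  · exact hjk
  · rcases Set.eq_or_ssubset_of_subset hkj with hkj | hkj
    exacts [hkj.ge, absurd hkj (hmin k hk)]
  · obtain ⟨e, he⟩ := h.nonempty i fun hir ↦ hi (hir ▸ h.root_eq_univ)
    exact absurd (hk.1 he) (Set.disjoint_left.1 hdisj (hj.1 he))

theorem laminarParent_spec [Finite E] (h : IsRootedLaminar F r) (hi : F i ≠ Set.univ) :
    F i ⊂ F (laminarParent F i) ∧ ∀ k, F i ⊂ F k → F (laminarParent F i) ⊆ F k := by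
  rw [laminarParent, dif_pos (h.exists_least_ssuperset hi)]
  exact (h.exists_least_ssuperset hi).choose_spec

theorem laminarParent_root (h : IsRootedLaminar F r) : laminarParent F r = r := by
  rw [laminarParent, dif_neg]
  rintro ⟨j, hj, -⟩
  exact hj.2 (by rw [h.root_eq_univ]; exact Set.subset_univ _)

theorem subset_laminarParent [Finite E] (h : IsRootedLaminar F r) (i : ι) :
    F i ⊆ F (laminarParent F i) := by
  by_cases hi : F i = Set.univ
  · rw [h.injective (hi.trans h.root_eq_univ.symm), h.laminarParent_root]
  · exact (h.laminarParent_spec hi).1.subset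

theorem subset_iterate_laminarParent [Finite E] (h : IsRootedLaminar F r) (n : ℕ) (x : ι) :
    F x ⊆ F ((laminarParent F)^[n] x) := by
  induction n generalizing x with
  | zero => exact subset_rfl
  | succ n ih => exact (h.subset_laminarParent x).trans (ih _)

theorem exists_iterate_laminarParent_eq_iff [Finite E] (h : IsRootedLaminar F r) :
    (∃ n, (laminarParent F)^[n] x = v) ↔ F x ⊆ F v := by
  refine ⟨fun ⟨n, hn⟩ ↦ hn ▸ h.subset_iterate_laminarParent n x, fun hxv ↦ ?_⟩
  induction x using (InvImage.wf F wellFounded_gt).induction with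
  | _ x ih =>
  rcases Set.eq_or_ssubset_of_subset hxv with hxv | hxv
  · exact ⟨0, h.injective hxv⟩
  obtain ⟨hpx, hpx_least⟩ := h.laminarParent_spec (hxv.trans_subset (Set.subset_univ _)).ne
  obtain ⟨n, hn⟩ := ih _ hpx (hpx_least v hxv)
  exact ⟨n + 1, hn⟩

theorem exists_iterate_laminarParent_eq_root [Finite E] (h : IsRootedLaminar F r) (x : ι) :
    ∃ n, (laminarParent F)^[n] x = r :=
  h.exists_iterate_laminarParent_eq_iff.2 (h.root_eq_univ ▸ Set.subset_univ _)

theorem disjoint_laminarPart (h : IsRootedLaminar F r) (hij : i ≠ j) :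
    Disjoint (laminarPart F i) (laminarPart F j) := by
  have key : ∀ {i j}, F i ⊂ F j → Disjoint (laminarPart F i) (laminarPart F j) :=
    fun {i j} hij ↦ (disjoint_sdiff_self_right.mono_left
      (Set.subset_iUnion₂ (s := fun k (_ : F k ⊂ F j) ↦ F k) i hij)).mono_left Set.sdiff_subset
  have hF : F i ≠ F j := h.injective.ne hij
  rcases h.subset_or_subset_or_disjoint i j with hsub | hsub | hdisj
  · exact key (hsub.ssubset_of_ne hF)
  · exact (key (hsub.ssubset_of_ne hF.symm)).symm
  · exact hdisj.mono Set.sdiff_subset Set.sdiff_subset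

theorem isPartitionFam_laminarPart [Finite E] (h : IsRootedLaminar F r) :
    IsPartitionFam (laminarPart F) := by
  refine ⟨fun i j hij ↦ h.disjoint_laminarPart hij, Set.eq_univ_of_univ_subset ?_⟩
  rw [← h.root_eq_univ, ← biUnion_laminarPart F r]
  exact Set.iUnion₂_subset fun x _ ↦ Set.subset_iUnion _ x

theorem adj_treeSide_laminarParent [Finite E] (h : IsRootedLaminar F r) (hv : v ≠ r) :
    (parentGraph (laminarParent F)).Adj v (laminarParent F v) ∧
    treeSide (parentGraph (laminarParent F)) (laminarPart F) v (laminarParent F v) = F v ∧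
    treeSide (parentGraph (laminarParent F)) (laminarPart F) (laminarParent F v) v = (F v)ᶜ := by
  have hr := h.laminarParent_root
  have hterm := h.exists_iterate_laminarParent_eq_root
  have hdesc : {x | ∃ n, (laminarParent F)^[n] x = v} = {x | F x ⊆ F v} :=
    Set.ext fun _ ↦ h.exists_iterate_laminarParent_eq_iff
  refine ⟨parentGraph_adj_parent (parent_ne_self hterm hv), ?_, ?_⟩
  · rw [treeSide, setOf_reachable_deleteEdges_self hr hterm hv, hdesc, biUnion_laminarPart F]
  · rw [treeSide, Sym2.eq_swap, setOf_reachable_deleteEdges_parent hr hterm hv, hdesc,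
      h.isPartitionFam_laminarPart.biUnion_compl, biUnion_laminarPart F]

end IsRootedLaminar

end Laminar

theorem exists_treeDecomposition_of_laminar [Finite E] (L : Finset (Set E))
    (hlam : ∀ A ∈ L, ∀ B ∈ L, A ⊆ B ∨ B ⊆ A ∨ Disjoint A B)
    (hne : ∀ A ∈ L, A.Nonempty) (hne_univ : ∀ A ∈ L, A ≠ Set.univ) :
    ∃ (V : Type) (_ : Fintype V) (G : SimpleGraph V) (P : V → Set E),
      G.IsTree ∧ IsPartitionFam P ∧
      ∀ A ∈ L, ∃ t u, G.Adj t u ∧ treeSide G P t u = A ∧ treeSide G P u t = Aᶜ := by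
  classical
  set M := insert Set.univ L
  set F : Fin M.card → Set E := fun i ↦ M.equivFin.symm i
  have hF_apply : ∀ A (hA : A ∈ M), F (M.equivFin ⟨A, hA⟩) = A := by simp [F]
  have hmem : ∀ i, F i ∈ M := fun i ↦ (M.equivFin.symm i).2
  set r := M.equivFin ⟨Set.univ, Finset.mem_insert_self _ _⟩
  have hlam' : ∀ i j, F i ⊆ F j ∨ F j ⊆ F i ∨ Disjoint (F i) (F j) := fun i j ↦ by
    rcases Finset.mem_insert.1 (hmem i) with hi | hi
    · exact Or.inr (Or.inl (hi ▸ Set.subset_univ _))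
    rcases Finset.mem_insert.1 (hmem j) with hj | hj
    · exact Or.inl (hj ▸ Set.subset_univ _)
    exact hlam _ hi _ hj
  have hF : IsRootedLaminar F r :=
    { injective := fun i j hij ↦ M.equivFin.symm.injective (Subtype.ext hij)
      subset_or_subset_or_disjoint := hlam'
      nonempty := fun i hi ↦ by
        refine (Finset.mem_insert.1 (hmem i)).elim (fun hiu ↦ absurd ?_ hi) (hne _)
        rw [← M.equivFin.apply_symm_apply i]
        exact congrArg M.equivFin (Subtype.ext hiu)
      root_eq_univ := hF_apply _ _ }
  refine ⟨Fin M.card, inferInstance, _, _, parentGraph_isTree hF.laminarParent_root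
    hF.exists_iterate_laminarParent_eq_root, hF.isPartitionFam_laminarPart, fun A hA ↦ ?_⟩
  have hAM : A ∈ M := Finset.mem_insert_of_mem hA
  have hvr : M.equivFin ⟨A, hAM⟩ ≠ r := fun h ↦
    hne_univ A hA (by simpa using congrArg Subtype.val (M.equivFin.injective h))
  rw [← hF_apply A hAM]
  exact ⟨_, _, hF.adj_treeSide_laminarParent hvr⟩

theorem subset_or_subset_or_disjoint_of_nested {e₀ : E} {A B : Set E} (h : Nested A Aᶜ B Bᶜ)
    (hA : e₀ ∉ A) (hB : e₀ ∉ B) : A ⊆ B ∨ B ⊆ A ∨ Disjoint A B := by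
  rcases h with h | h | h | h
  · exact Or.inl h
  · exact Or.inr (Or.inr (Set.subset_compl_iff_disjoint_right.1 h))
  · exact absurd (h hA) hB
  · exact Or.inr (Or.inl (Set.compl_subset_compl.1 h))

/-- Complementing every member that contains a fixed point `e₀` makes a nested family of
separations laminar. -/
theorem exists_treeDecomposition_of_nested [Finite E] (N : Finset (Set E))
    (hnest : ∀ A ∈ N, ∀ B ∈ N, Nested A Aᶜ B Bᶜ) (hproper : ∀ A ∈ N, A ≠ ∅ ∧ A ≠ Set.univ) :
    ∃ (V : Type) (_ : Fintype V) (G : SimpleGraph V) (P : V → Set E),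
      G.IsTree ∧ IsPartitionFam P ∧ ∀ A ∈ N, ∃ t u, G.Adj t u ∧ treeSide G P t u = A := by
  classical
  rcases isEmpty_or_nonempty E with hE | ⟨⟨e₀⟩⟩
  · obtain ⟨V, hV, G, P, hG, hP, -⟩ := exists_treeDecomposition_of_laminar (E := E) ∅
      (by simp) (by simp) (by simp)
    exact ⟨V, hV, G, P, hG, hP, fun A hA ↦ absurd (Subsingleton.elim A ∅) (hproper A hA).1⟩
  set orient : Set E → Set E := fun A ↦ if e₀ ∈ A then Aᶜ else A
  have horient : ∀ A, orient A = A ∧ e₀ ∉ A ∨ orient A = Aᶜ ∧ e₀ ∉ Aᶜ := fun A ↦ by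
    by_cases h : e₀ ∈ A <;> simp [orient, h]
  have hnest' : ∀ A B, Nested A Aᶜ B Bᶜ → Nested (orient A) (orient A)ᶜ (orient B) (orient B)ᶜ :=
    fun A B h ↦ by
      rcases horient A with ⟨hA, -⟩ | ⟨hA, -⟩ <;> rcases horient B with ⟨hB, -⟩ | ⟨hB, -⟩ <;>
        simp only [hA, hB, nested_compl_left, nested_compl_right, h]
  have hnot : ∀ A, e₀ ∉ orient A := fun A ↦ by rcases horient A with ⟨h, h'⟩ | ⟨h, h'⟩ <;> rwa [h]
  obtain ⟨V, hV, G, P, hG, hP, hL⟩ := exists_treeDecomposition_of_laminar (N.image orient)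
    (by
      simp only [Finset.forall_mem_image]
      exact fun A hA B hB ↦ subset_or_subset_or_disjoint_of_nested (hnest' A B (hnest A hA B hB))
        (hnot A) (hnot B))
    (by
      simp only [Finset.forall_mem_image]
      intro A hA
      rcases horient A with ⟨h, -⟩ | ⟨h, -⟩ <;> rw [h]
      · exact Set.nonempty_iff_ne_empty.2 (hproper A hA).1
      · exact Set.nonempty_compl.2 (hproper A hA).2)
    (by simp only [Finset.forall_mem_image]; exact fun A _ h ↦ hnot A (h ▸ Set.mem_univ e₀))
  refine ⟨V, hV, G, P, hG, hP, fun A hA ↦ ?_⟩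
  obtain ⟨t, u, htu, hA₁, hA₂⟩ := hL _ (Finset.mem_image_of_mem orient hA)
  rcases horient A with ⟨h, -⟩ | ⟨h, -⟩ <;> rw [h] at hA₁ hA₂
  · exact ⟨t, u, htu, hA₁⟩
  · exact ⟨u, t, htu.symm, by rw [hA₂, compl_compl]⟩

/-- Tangle-tree theorem: there is a tree-decomposition distinguishing any two
(distinct) maximal tangles efficiently. -/
theorem stmt_14 [Fintype E] (f : Set E → ℤ) (hsym : FSymm f) (hsub : FSubmod f) :
    ∃ (V : Type) (_ : Fintype V) (G : SimpleGraph V) (P : V → Set E),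
      G.IsTree ∧ IsPartitionFam P ∧
      ∀ P' Q : Set (Set E), IsMaximalTangle f P' → IsMaximalTangle f Q →
        P' ≠ Q → ∃ t u, G.Adj t u ∧ DistinguishesEff f (treeSide G P t u) P' Q := by
  obtain ⟨N, hnest, hproper, hdist⟩ := exists_nested_distinguishesEff hsym hsub
  obtain ⟨V, hV, G, P, hG, hP, hN⟩ := exists_treeDecomposition_of_nested N hnest hproper
  refine ⟨V, hV, G, P, hG, hP, fun P' Q hP' hQ hPQ ↦ ?_⟩
  obtain ⟨A, hA, hAeff⟩ := hdist P' Q hP' hQ hPQ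
  obtain ⟨t, u, htu, rfl⟩ := hN A hA
  exact ⟨t, u, htu, hAeff⟩
end

section
/- Let (T, (P_t)) be a tree-decomposition of a finite set E and Q a tangle that orients every edge-separation of T. Then the smallest subgraph S(Q) of T in which Q lives is connected (a subtree). -/
variable {E : Type*}

variable {V : Type*}

/-- A tangle `Q` lives in a nonempty subgraph `S` of the decomposition tree if
for every vertex `t` of `S` and every edge `tu` incident with `t` but not in
`S`, `Q` orients the corresponding separation towards the `t`-side, i.e. the
`u`-side is small in `Q`. -/
def LivesIn (G : SimpleGraph V) (P : V → Set E) (Q : Set (Set E))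
    (S : G.Subgraph) : Prop :=
  S.verts.Nonempty ∧
    ∀ t ∈ S.verts, ∀ u : V, G.Adj t u → ¬ S.Adj t u → treeSide G P u t ∈ Q


/-!
Since no two small sides of a tangle cover `E`, every vertex of `T` has at most one edge
oriented away from it, and no edge is oriented both ways. Counting edges of the finite tree,
some vertex `t₀` has all its incident edges oriented towards it, and then, inductively along
paths, every edge of `T` is oriented towards `t₀`. Hence `Q` lives in `{t₀}`, and every
subgraph `S` in which `Q` lives contains `t₀`: on the path from a vertex of `S` to `t₀`, the
first edge leaving `S` would be oriented both ways. So `S(Q)` is the single vertex `t₀`.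
-/

open SimpleGraph

section TreeSides

variable {G : SimpleGraph V} {P : V → Set E}

lemma SimpleGraph.Preconnected.reachable_deleteEdges_or (hG : G.Preconnected) (a b v : V) :
    (G.deleteEdges {s(a, b)}).Reachable a v ∨ (G.deleteEdges {s(a, b)}).Reachable b v := by
  obtain ⟨p⟩ := hG a v
  suffices ∀ {x y : V} (_ : G.Walk x y),
      (G.deleteEdges {s(a, b)}).Reachable a x ∨ (G.deleteEdges {s(a, b)}).Reachable b x →
      (G.deleteEdges {s(a, b)}).Reachable a y ∨ (G.deleteEdges {s(a, b)}).Reachable b y from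
    this p (.inl .rfl)
  intro x y p
  induction p with
  | nil => exact id
  | @cons x z y hxz _ ih =>
    intro hx
    by_cases he : s(x, z) = s(a, b)
    · obtain ⟨-, rfl⟩ | ⟨-, rfl⟩ := Sym2.eq_iff.mp he
      · exact ih (.inr .rfl)
      · exact ih (.inl .rfl)
    · have hxz' : (G.deleteEdges {s(a, b)}).Adj x z := deleteEdges_adj.mpr ⟨hxz, he⟩
      exact ih (hx.imp (·.trans hxz'.reachable) (·.trans hxz'.reachable))

lemma treeSide_union_treeSide_eq_univ_of_reachable (hP : ⋃ x, P x = Set.univ) {a b c d : V}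
    (h : ∀ v, (G.deleteEdges {s(a, b)}).Reachable a v ∨
      (G.deleteEdges {s(c, d)}).Reachable c v) :
    treeSide G P a b ∪ treeSide G P c d = Set.univ := by
  refine Set.eq_univ_of_forall fun x => ?_
  obtain ⟨v, hv⟩ := Set.mem_iUnion.mp (hP ▸ Set.mem_univ x)
  simp only [treeSide, Set.mem_union, Set.mem_iUnion₂]
  exact (h v).imp (fun h => ⟨v, h, hv⟩) (fun h => ⟨v, h, hv⟩)

lemma treeSide_union_swap_eq_univ (hG : G.Preconnected) (hP : ⋃ x, P x = Set.univ) (a b : V) :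
    treeSide G P a b ∪ treeSide G P b a = Set.univ :=
  treeSide_union_treeSide_eq_univ_of_reachable hP fun v => by
    rw [Sym2.eq_swap (a := b)]
    exact hG.reachable_deleteEdges_or a b v

lemma treeSide_union_treeSide_eq_univ_of_ne (hG : G.Preconnected) (hP : ⋃ x, P x = Set.univ)
    {a b c : V} (hab : G.Adj a b) (hbc : b ≠ c) :
    treeSide G P a b ∪ treeSide G P a c = Set.univ := by
  classical
  refine treeSide_union_treeSide_eq_univ_of_reachable hP fun v =>
    or_iff_not_imp_left.mpr fun hav => ?_
  obtain ⟨p⟩ := (hG.reachable_deleteEdges_or a b v).resolve_left hav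
  have ha : a ∉ p.support := fun ha => hav ⟨p.dropUntil a ha⟩
  have hab' : (G.deleteEdges {s(a, c)}).Adj a b := by
    simp [hab, hbc, hab.ne']
  refine hab'.reachable.trans (reachable_deleteEdges_iff_exists_walk.mpr
    ⟨p.mapLe (deleteEdges_le _), fun hac => ha ?_⟩)
  simpa using (p.mapLe (deleteEdges_le _)).fst_mem_support_of_mem_edges hac

end TreeSides

lemma IsTangle.union_ne_univ_s16 {f : Set E → ℤ} {k : ℤ} {Q : Set (Set E)}
    (hQ : IsTangle f k Q) :
    ∀ A ∈ Q, ∀ B ∈ Q, A ∪ B ≠ Set.univ := fun A hA B hB => by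
  simpa using hQ.2.2.1 A hA A hA B hB

section Sink

variable {G : SimpleGraph V} {P : V → Set E} {Q : Set (Set E)}

def IsSink (G : SimpleGraph V) (P : V → Set E) (Q : Set (Set E)) (t : V) : Prop :=
  ∀ u, G.Adj t u → treeSide G P u t ∈ Q

lemma exists_isSink [Fintype V] (hG : G.IsTree) (hP : ⋃ x, P x = Set.univ)
    (hQ : ∀ A ∈ Q, ∀ B ∈ Q, A ∪ B ≠ Set.univ)
    (hor : ∀ t u, G.Adj t u → treeSide G P t u ∈ Q ∨ treeSide G P u t ∈ Q) :
    ∃ t, IsSink G P Q t := by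
  classical
  by_contra! h
  have hout : ∀ t, ∃ u, G.Adj t u ∧ treeSide G P t u ∈ Q := fun t => by
    obtain ⟨u, hadj, hu⟩ := not_forall₂.mp (h t)
    exact ⟨u, hadj, (hor t u hadj).resolve_right hu⟩
  choose o hadj ho using hout
  have hcard : Fintype.card G.edgeSet < Fintype.card V := by
    have := hG.card_edgeFinset
    rw [edgeFinset, Set.toFinset_card] at this
    omega
  obtain ⟨u, v, huv, he⟩ := Fintype.exists_ne_map_eq_of_card_lt
    (fun t => (⟨s(t, o t), hadj t⟩ : G.edgeSet)) hcard
  obtain ⟨rfl, -⟩ | ⟨hu, hv⟩ := Sym2.eq_iff.mp (congrArg Subtype.val he)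
  · exact huv rfl
  · refine hQ _ (ho u) _ (ho v) ?_
    rw [hv, ← hu]
    exact treeSide_union_swap_eq_univ hG.1.preconnected hP u v

namespace IsSink

variable {t₀ : V}

lemma livesIn_singletonSubgraph (hs : IsSink G P Q t₀) :
    LivesIn G P Q (G.singletonSubgraph t₀) :=
  ⟨⟨t₀, rfl⟩, fun _ ht u hadj _ => by
    rw [singletonSubgraph_verts, Set.mem_singleton_iff] at ht
    exact ht ▸ hs u (ht ▸ hadj)⟩

lemma treeSide_mem_of_isPath (hG : G.Preconnected) (hP : ⋃ x, P x = Set.univ)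
    (hQ : ∀ A ∈ Q, ∀ B ∈ Q, A ∪ B ≠ Set.univ)
    (hor : ∀ t u, G.Adj t u → treeSide G P t u ∈ Q ∨ treeSide G P u t ∈ Q)
    (hs : IsSink G P Q t₀) {a b : V} (hab : G.Adj a b) (p : G.Walk b t₀)
    (hp : (Walk.cons hab p).IsPath) : treeSide G P a b ∈ Q := by
  induction p generalizing a with
  | nil => exact hs a hab.symm
  | @cons b c _ hbc q ih =>
    have hac : a ≠ c := by
      rintro rfl
      exact ((Walk.cons_isPath_iff _ _).mp hp).2 (by simp)
    refine (hor a b hab).resolve_right fun hba => hQ _ hba _ (ih hs hbc hp.of_cons) ?_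
    exact treeSide_union_treeSide_eq_univ_of_ne hG hP hab.symm hac

lemma mem_verts_of_livesIn (hG : G.IsTree) (hP : ⋃ x, P x = Set.univ)
    (hQ : ∀ A ∈ Q, ∀ B ∈ Q, A ∪ B ≠ Set.univ)
    (hor : ∀ t u, G.Adj t u → treeSide G P t u ∈ Q ∨ treeSide G P u t ∈ Q)
    (hs : IsSink G P Q t₀) {S : G.Subgraph} (hS : LivesIn G P Q S) : t₀ ∈ S.verts := by
  obtain ⟨s, hs₀⟩ := hS.1
  obtain ⟨p, hp⟩ := hG.1.exists_isPath s t₀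
  induction p with
  | nil => exact hs₀
  | @cons b c _ hbc q ih =>
    by_cases hSbc : S.Adj b c
    · exact ih hs (S.edge_vert hSbc.symm) hp.of_cons
    · exact absurd (treeSide_union_swap_eq_univ hG.1.preconnected hP b c)
        (hQ _ (hs.treeSide_mem_of_isPath hG.1.preconnected hP hQ hor hbc q hp) _
          (hS.2 b hs₀ c hbc hSbc))

end IsSink

end Sink

theorem stmt_16_general [Fintype V] (f : Set E → ℤ)
    (G : SimpleGraph V) (hG : G.IsTree) (P : V → Set E) (hP : IsPartitionFam P)
    (Q : Set (Set E)) (hQ : ∃ k, IsTangle f k Q)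
    (hor : ∀ t u : V, G.Adj t u →
      treeSide G P t u ∈ Q ∨ treeSide G P u t ∈ Q) :
    (sInf {S : G.Subgraph | LivesIn G P Q S}).Connected := by
  obtain ⟨k, hk⟩ := hQ
  obtain ⟨t₀, hs⟩ := exists_isSink hG hP.2 hk.union_ne_univ_s16 hor
  have hS : sInf {S : G.Subgraph | LivesIn G P Q S} = G.singletonSubgraph t₀ :=
    le_antisymm (sInf_le hs.livesIn_singletonSubgraph) <| le_sInf fun S hS =>
      (singletonSubgraph_le_iff _ _).mpr <|
        hs.mem_verts_of_livesIn hG hP.2 hk.union_ne_univ_s16 hor hS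
  rw [hS]
  exact Subgraph.singletonSubgraph_connected

/-- The smallest subgraph in which a tangle lives (the intersection of all
subgraphs in which it lives) is connected, i.e. a subtree. -/
theorem stmt_16 [Fintype E] [Fintype V] (f : Set E → ℤ)
    (hsym : FSymm f) (hsub : FSubmod f)
    (G : SimpleGraph V) (hG : G.IsTree) (P : V → Set E) (hP : IsPartitionFam P)
    (Q : Set (Set E)) (hQ : ∃ k, IsTangle f k Q)
    (hor : ∀ t u : V, G.Adj t u →
      treeSide G P t u ∈ Q ∨ treeSide G P u t ∈ Q) :
    (sInf {S : G.Subgraph | LivesIn G P Q S}).Connected :=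
  stmt_16_general f G hG P hP Q hQ hor
end
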